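/- arXiv:1702.02867 — 9 statements merged into one kernel-verified Lean document; each statement's English description precedes it below -/
import Mathlib

section
/- For 0 < q < 1/2 and p = 1 - q, and any integer z ≥ 1, the quantity 1 - ∑_{k=0}^{z-1} (p^z q^k - q^z p^k) C(k+z-1, k) equals I_{4pq}(z, 1/2), where I_x(a,b) is the regularized incomplete beta function. -/
/-!
Both sides satisfy the same recurrence in `z`. Integrating `t ^ a * (1 - t) ^ b` by parts gives
`I_x(a + 1, b) = I_x(a, b) - Γ(a + b) / (Γ(a + 1) Γ(b)) * x ^ a * (1 - x) ^ b`; at `x = 4pq`,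
`b = 1/2` we have `√(1 - x) = p - q` and `Γ(z + 1/2) / (Γ(z + 1) √π) = C(2z, z) / 4 ^ z`, so the
decrement is `C(2z, z) (pq) ^ z (p - q)`. Pascal's rule shows that the left-hand side drops by the
same amount from `z` to `z + 1`, and for `z = 1` both sides equal `1 - (p - q)`.
-/

open Real MeasureTheory

/-- Regularized incomplete beta function. -/
noncomputable def regIncBeta (x a b : ℝ) : ℝ :=
  (Real.Gamma (a + b) / (Real.Gamma a * Real.Gamma b)) *
    ∫ t in (0:ℝ)..x, t ^ (a - 1) * (1 - t) ^ (b - 1)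

open Finset

theorem mul_sum_pow_mul_choose_of_add_eq_one {R : Type*} [CommRing R] {p q : R}
    (hpq : p + q = 1) (n N : ℕ) :
    p * ∑ k ∈ range (N + 1), q ^ k * ((k + (n + 1)).choose k : R) =
      ∑ k ∈ range (N + 1), q ^ k * ((k + n).choose k : R) -
        q ^ (N + 1) * ((N + (n + 1)).choose N : R) := by
  obtain rfl : p = 1 - q := eq_sub_of_add_eq hpq
  induction N with
  | zero => simp
  | succ N ih =>
    have hpascal : ((N + 1 + (n + 1)).choose (N + 1) : R) =
        ((N + (n + 1)).choose N : R) + ((N + 1 + n).choose (N + 1) : R) := by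
      rw [show N + 1 + (n + 1) = N + (n + 1) + 1 by ring, Nat.choose_succ_succ',
        show N + (n + 1) = N + 1 + n by ring]
      push_cast; ring
    rw [sum_range_succ, mul_add, ih, sum_range_succ _ (N + 1), hpascal]
    ring

theorem sum_pow_sub_pow_mul_choose_succ {R : Type*} [CommRing R] {p q : R} (hpq : p + q = 1)
    (n : ℕ) :
    ∑ k ∈ range (n + 1 + 1),
        (p ^ (n + 1 + 1) * q ^ k - q ^ (n + 1 + 1) * p ^ k) * ((k + (n + 1)).choose k : R) =
      ∑ k ∈ range (n + 1), (p ^ (n + 1) * q ^ k - q ^ (n + 1) * p ^ k) * ((k + n).choose k : R) +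
        (n + 1).centralBinom * (p * q) ^ (n + 1) * (p - q) := by
  simp only [sub_mul, sum_sub_distrib, mul_assoc, ← mul_sum]
  rw [pow_succ p, pow_succ q, mul_assoc, mul_assoc, mul_sum_pow_mul_choose_of_add_eq_one hpq,
    mul_sum_pow_mul_choose_of_add_eq_one (add_comm p q ▸ hpq),
    sum_range_succ (fun k => q ^ k * ((k + n).choose k : R)) (n + 1),
    sum_range_succ (fun k => p ^ k * ((k + n).choose k : R)) (n + 1),
    Nat.centralBinom_eq_two_mul_choose, two_mul]
  ring

theorem regIncBeta_one {b : ℝ} (hb : 0 < b) (x : ℝ) : regIncBeta x 1 b = 1 - (1 - x) ^ b := by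
  have hint : ∫ t in (0:ℝ)..x, (1 - t) ^ (b - 1) = (1 - (1 - x) ^ b) / b := by
    rw [intervalIntegral.integral_comp_sub_left (fun t => t ^ (b - 1)),
      integral_rpow (by left; linarith)]
    simp
  rw [regIncBeta, add_comm, Gamma_add_one hb.ne', Gamma_one]
  simp only [sub_self, rpow_zero, one_mul, hint]
  field_simp

theorem one_sub_ne_zero_of_mem_uIcc {x t : ℝ} (hx : x < 1) (ht : t ∈ Set.uIcc 0 x) : 1 - t ≠ 0 :=
  sub_ne_zero.mpr (ht.2.trans_lt (max_lt one_pos hx)).ne'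

theorem intervalIntegrable_rpow_mul_one_sub_rpow {x c : ℝ} (hx : x < 1) (hc : 0 ≤ c) (d : ℝ) :
    IntervalIntegrable (fun t => t ^ c * (1 - t) ^ d) volume 0 x :=
  ContinuousOn.intervalIntegrable <| (continuous_rpow_const hc).continuousOn.mul <|
    (continuousOn_const.sub continuousOn_id).rpow_const fun _ ht =>
      Or.inl (one_sub_ne_zero_of_mem_uIcc hx ht)

theorem add_mul_integral_rpow_mul_one_sub_rpow {x a b : ℝ} (hx : x < 1) (ha : 1 ≤ a) :
    (a + b) * ∫ t in (0:ℝ)..x, t ^ a * (1 - t) ^ (b - 1) =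
      a * (∫ t in (0:ℝ)..x, t ^ (a - 1) * (1 - t) ^ (b - 1)) - x ^ a * (1 - x) ^ b := by
  have hderiv : ∀ t ∈ Set.uIcc 0 x, HasDerivAt (fun t => t ^ a * (1 - t) ^ b)
      (a * (t ^ (a - 1) * (1 - t) ^ (b - 1)) - (a + b) * (t ^ a * (1 - t) ^ (b - 1))) t := by
    intro t ht
    have h1t := one_sub_ne_zero_of_mem_uIcc hx ht
    have hta : t ^ a = t ^ (a - 1) * t := by
      rcases eq_or_ne t 0 with rfl | ht0
      · simp [zero_rpow (by linarith : a ≠ 0)]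
      · rw [rpow_sub_one ht0, div_mul_cancel₀ _ ht0]
    have h1tb : (1 - t) ^ b = (1 - t) ^ (b - 1) * (1 - t) := by
      rw [rpow_sub_one h1t, div_mul_cancel₀ _ h1t]
    refine ((hasDerivAt_rpow_const (Or.inr ha)).mul
      (((hasDerivAt_id t).const_sub 1).rpow_const (p := b) (Or.inl h1t))).congr_deriv ?_
    simp only [id, hta, h1tb]
    ring
  have hmain := intervalIntegral.integral_eq_sub_of_hasDerivAt hderiv
    (((intervalIntegrable_rpow_mul_one_sub_rpow hx (by linarith) _).const_mul a).sub
      ((intervalIntegrable_rpow_mul_one_sub_rpow hx (by linarith) _).const_mul (a + b)))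
  rw [intervalIntegral.integral_sub
      ((intervalIntegrable_rpow_mul_one_sub_rpow hx (by linarith) _).const_mul a)
      ((intervalIntegrable_rpow_mul_one_sub_rpow hx (by linarith) _).const_mul (a + b)),
    intervalIntegral.integral_const_mul, intervalIntegral.integral_const_mul,
    zero_rpow (by linarith : a ≠ 0), zero_mul, sub_zero] at hmain
  linarith

theorem regIncBeta_add_one {x a b : ℝ} (hx : x < 1) (ha : 1 ≤ a) (hb : 0 < b) :
    regIncBeta x (a + 1) b =
      regIncBeta x a b - Gamma (a + b) / (Gamma (a + 1) * Gamma b) * (x ^ a * (1 - x) ^ b) := by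
  have hGa : Gamma a ≠ 0 := (Gamma_pos_of_pos (by linarith)).ne'
  have hGb : Gamma b ≠ 0 := (Gamma_pos_of_pos hb).ne'
  have hab : a + b ≠ 0 := by linarith
  have hibp := add_mul_integral_rpow_mul_one_sub_rpow (b := b) hx ha
  simp only [regIncBeta, add_sub_cancel_right, add_right_comm a 1 b]
  rw [Gamma_add_one hab, Gamma_add_one (by linarith : a ≠ 0)]
  field_simp
  exact hibp

theorem Gamma_nat_add_half_div (n : ℕ) :
    Gamma (n + 1 / 2) / (Gamma (n + 1) * Gamma (1 / 2)) = n.centralBinom / 4 ^ n := by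
  induction n with
  | zero => simp [-one_div, Gamma_one_half_eq, (sqrt_pos.mpr pi_pos).ne']
  | succ n ih =>
    have hcb : ((n + 1 : ℕ) : ℝ) * (n + 1).centralBinom = 2 * (2 * n + 1) * n.centralBinom := by
      exact_mod_cast Nat.succ_mul_centralBinom_succ n
    have hGn : Gamma (n + 1) ≠ 0 := (Gamma_pos_of_pos (by positivity)).ne'
    have hGh : Gamma (1 / 2) ≠ 0 := (Gamma_pos_of_pos (by norm_num)).ne'
    rw [Nat.cast_succ, add_right_comm, Gamma_add_one (by positivity), Gamma_add_one (by positivity)]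
    rw [div_eq_div_iff (mul_ne_zero hGn hGh) (by positivity)] at ih
    push_cast at hcb
    rw [div_eq_div_iff (by positivity) (by positivity)]
    linear_combination (4 * ((n : ℝ) + 1/2)) * ih - Gamma (n + 1) * Gamma (1 / 2) * hcb

theorem one_sub_sum_pow_sub_pow_mul_choose_eq_regIncBeta {p q : ℝ} (hpq : p + q = 1)
    (hqp : q < p) (n : ℕ) :
    1 - ∑ k ∈ range (n + 1), (p ^ (n + 1) * q ^ k - q ^ (n + 1) * p ^ k) * ((k + n).choose k : ℝ) =
      regIncBeta (4 * p * q) (n + 1) (1 / 2) := by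
  have hx : 4 * p * q < 1 := by nlinarith
  have hsqrt : (1 - 4 * p * q) ^ (1 / 2 : ℝ) = p - q := by
    rw [show 1 - 4 * p * q = (p - q) ^ 2 by linear_combination (-(p + q + 1)) * hpq,
      ← sqrt_eq_rpow, sqrt_sq (by linarith)]
  induction n with
  | zero =>
    simp only [Nat.cast_zero, zero_add]
    rw [regIncBeta_one one_half_pos, hsqrt]
    simp
  | succ n ih =>
    have hG := Gamma_nat_add_half_div (n + 1)
    push_cast at hG ⊢
    rw [regIncBeta_add_one hx (le_add_of_nonneg_left n.cast_nonneg) one_half_pos, ← ih, hG, hsqrt,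
      ← Nat.cast_add_one, rpow_natCast, sum_pow_sub_pow_mul_choose_succ hpq]
    field_simp
    ring

theorem stmt0_general (q : ℝ) (hq1 : q < 1/2) (p : ℝ) (hp : p = 1 - q)
    (z : ℕ) (hz : 1 ≤ z) :
    1 - ∑ k ∈ Finset.range z,
        (p ^ z * q ^ k - q ^ z * p ^ k) * (Nat.choose (k + z - 1) k : ℝ)
      = regIncBeta (4 * p * q) (z : ℝ) (1/2) := by
  obtain ⟨n, rfl⟩ := Nat.exists_eq_add_of_le' hz
  simpa using one_sub_sum_pow_sub_pow_mul_choose_eq_regIncBeta (p := p) (q := q)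
    (by rw [hp]; ring) (by rw [hp]; linarith) n

theorem stmt0 (q : ℝ) (hq0 : 0 < q) (hq1 : q < 1/2) (p : ℝ) (hp : p = 1 - q)
    (z : ℕ) (hz : 1 ≤ z) :
    1 - ∑ k ∈ Finset.range z,
        (p ^ z * q ^ k - q ^ z * p ^ k) * (Nat.choose (k + z - 1) k : ℝ)
      = regIncBeta (4 * p * q) (z : ℝ) (1/2) :=
  stmt0_general q hq1 p hp z hz
end

section
/- Fix k ≥ 0 and λ > 0. If n → ∞, q_n → 0 and n·q_n/(1-q_n) → λ, then the negative binomial probability p_n^n q_n^k C(k+n-1, k) (with p_n = 1 - q_n) converges to the Poisson probability λ^k e^{-λ}/k!. -/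
open Filter Real

lemma asc_cast (n k : ℕ) :
    (Nat.ascFactorial n k : ℝ) = ∏ i ∈ Finset.range k, ((n : ℝ) + i) := by
  induction k with
  | zero => simp
  | succ k ih =>
      rw [Nat.ascFactorial_succ, Finset.prod_range_succ, ← ih]
      push_cast; ring

theorem stmt5 (k : ℕ) (lam : ℝ) (hlam : 0 < lam)
    (q : ℕ → ℝ) (hq : ∀ n, 0 < q n ∧ q n < 1)
    (hq0 : Tendsto q atTop (nhds 0))
    (hl : Tendsto (fun n : ℕ => (n : ℝ) * q n / (1 - q n)) atTop (nhds lam)) :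
    Tendsto (fun n => (1 - q n) ^ n * q n ^ k * (Nat.choose (k + n - 1) k : ℝ))
      atTop (nhds (lam ^ k * Real.exp (-lam) / (Nat.factorial k : ℝ))) := by
  have hqpos : ∀ n, 0 < q n := fun n => (hq n).1
  have hqlt : ∀ n, q n < 1 := fun n => (hq n).2
  have h1q : ∀ n, (0:ℝ) < 1 - q n := fun n => by linarith [hqlt n]
  have hone : Tendsto (fun n : ℕ => 1 - q n) atTop (nhds 1) := by
    simpa using tendsto_const_nhds.sub hq0
  -- n * q n → lam
  have hnq : Tendsto (fun n : ℕ => (n : ℝ) * q n) atTop (nhds lam) := by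
    have := hl.mul hone
    rw [mul_one] at this
    refine this.congr fun n => ?_
    exact div_mul_cancel₀ _ (h1q n).ne'
  -- log(1 - q n) / (- q n) → 1
  have hlog : Tendsto (fun n : ℕ => Real.log (1 - q n) / (-(q n))) atTop (nhds 1) := by
    have hd : HasDerivAt Real.log 1 1 := by
      simpa using Real.hasDerivAt_log one_ne_zero
    rw [hasDerivAt_iff_tendsto_slope] at hd
    have h1 : Tendsto (fun n : ℕ => 1 - q n) atTop (nhdsWithin 1 {(1:ℝ)}ᶜ) := by
      refine tendsto_nhdsWithin_of_tendsto_nhds_of_eventually_within _ hone ?_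
      filter_upwards with n
      simp only [Set.mem_compl_iff, Set.mem_singleton_iff]
      have := hqpos n; intro h; nlinarith
    have := hd.comp h1
    refine this.congr fun n => ?_
    simp only [Function.comp_apply, slope_def_field, Real.log_one]
    congr 1 <;> ring
  -- (1 - q n)^n → exp (-lam)
  have hnlog : Tendsto (fun n : ℕ => (n : ℝ) * Real.log (1 - q n)) atTop (nhds (-lam)) := by
    have := (hnq.mul hlog).neg
    rw [mul_one] at this
    refine this.congr fun n => ?_
    have hq' : q n ≠ 0 := (hqpos n).ne'
    field_simp
  have hexp : Tendsto (fun n : ℕ => (1 - q n) ^ n) atTop (nhds (Real.exp (-lam))) := by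
    have := (Real.continuous_exp.tendsto _).comp hnlog
    refine this.congr fun n => ?_
    simp only [Function.comp_apply]
    rw [← Real.log_pow, Real.exp_log (pow_pos (h1q n) n)]
  -- product part
  have hprod : Tendsto (fun n : ℕ => ∏ i ∈ Finset.range k, (((n : ℝ) + i) * q n))
      atTop (nhds (lam ^ k)) := by
    have : (lam : ℝ) ^ k = ∏ i ∈ Finset.range k, lam := by
      rw [Finset.prod_const, Finset.card_range]
    rw [this]
    refine tendsto_finset_prod _ fun i _ => ?_
    have h2 : Tendsto (fun n : ℕ => (i : ℝ) * q n) atTop (nhds 0) := by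
      simpa using (tendsto_const_nhds (x := (i:ℝ))).mul hq0
    have := hnq.add h2
    rw [add_zero] at this
    refine this.congr fun n => ?_
    ring
  have hmain := hexp.mul (hprod.div_const (Nat.factorial k : ℝ))
  have heq : Real.exp (-lam) * (lam ^ k / (Nat.factorial k : ℝ))
      = lam ^ k * Real.exp (-lam) / (Nat.factorial k : ℝ) := by ring
  rw [heq] at hmain
  refine hmain.congr' ?_
  filter_upwards [eventually_ge_atTop 1] with n hn
  have hasc : (Nat.ascFactorial n k : ℝ) = (Nat.factorial k : ℝ) * (Nat.choose (k + n - 1) k : ℝ) := by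
    rw_mod_cast [Nat.ascFactorial_eq_factorial_mul_choose']
    rw [Nat.add_comm]
  have hP : ∏ i ∈ Finset.range k, (((n : ℝ) + i) * q n)
      = (Nat.ascFactorial n k : ℝ) * q n ^ k := by
    rw [Finset.prod_mul_distrib, Finset.prod_const, Finset.card_range, asc_cast]
  rw [hP, hasc]
  have hf : (Nat.factorial k : ℝ) ≠ 0 := by positivity
  field_simp
end

section
/- For fixed 0 < s < 1 and b ∈ ℝ, the incomplete beta function satisfies B_s(z, b) ~ (s^z / z)·(1-s)^{b-1} as z → +∞; i.e., lim_{z→∞} z·s^{-z}·B_s(z,b) = (1-s)^{b-1}. -/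
open Filter Real intervalIntegral

/-- Incomplete beta function. -/
noncomputable def incBeta (x a b : ℝ) : ℝ :=
  ∫ t in (0:ℝ)..x, t ^ (a - 1) * (1 - t) ^ (b - 1)

theorem stmt7 (s : ℝ) (hs0 : 0 < s) (hs1 : s < 1) (b : ℝ) :
    Tendsto (fun z : ℝ => z * s ^ (-z) * incBeta s z b)
      atTop (nhds ((1 - s) ^ (b - 1))) := by
  set L : ℝ := (1 - s) ^ (b - 1) with hLdef
  have h1s : (0:ℝ) < 1 - s := by linarith
  have hL0 : 0 ≤ L := Real.rpow_nonneg h1s.le _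
  set M : ℝ := max L 1 with hMdef
  have hM0 : (0:ℝ) < M := lt_max_of_lt_right one_pos
  have hLM : L ≤ M := le_max_left _ _
  have hφM : ∀ t ∈ Set.Icc (0:ℝ) s, (1 - t) ^ (b - 1) ≤ M := by
    intro t ht
    rcases le_or_gt (b - 1) 0 with h | h
    · exact le_trans (Real.rpow_le_rpow_of_nonpos h1s (by linarith [ht.2]) h) hLM
    · exact le_trans (Real.rpow_le_one (by linarith [ht.2]) (by linarith [ht.1]) h.le)
        (le_max_right _ _)
  rw [Metric.tendsto_nhds]
  intro ε hε
  have hcont : ContinuousAt (fun t : ℝ => (1 - t) ^ (b - 1)) s := by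
    apply ContinuousAt.rpow_const
    · exact (continuous_const.sub continuous_id).continuousAt
    · left; exact h1s.ne'
  obtain ⟨δ, hδ0, hδ⟩ := Metric.continuousAt_iff.mp hcont (ε / 2) (by linarith)
  set c : ℝ := max 0 (s - δ / 2) with hcdef
  have hc0 : 0 ≤ c := le_max_left _ _
  have hcs : c < s := max_lt hs0 (by linarith)
  have hnear : ∀ t ∈ Set.Icc c s, |(1 - t) ^ (b - 1) - L| ≤ ε / 2 := by
    intro t ht
    have hd : dist t s < δ := by
      rw [Real.dist_eq, abs_sub_lt_iff]
      have h2 : s - δ / 2 ≤ c := le_max_right _ _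
      constructor <;> [linarith [ht.2]; linarith [ht.1]]
    have := hδ hd
    rw [Real.dist_eq] at this
    exact this.le
  have hcs' : c / s < 1 := (div_lt_one hs0).mpr hcs
  have hcsnn : (0:ℝ) ≤ c / s := div_nonneg hc0 hs0.le
  have htend : Tendsto (fun z : ℝ => 2 * M * (c / s) ^ z) atTop (nhds 0) := by
    have h := tendsto_rpow_atTop_of_base_lt_one (c / s) (by linarith) hcs'
    simpa using h.const_mul (2 * M)
  filter_upwards [htend.eventually_lt_const (show (0:ℝ) < ε / 2 by linarith),
    eventually_ge_atTop (2:ℝ)] with z hz1 hz2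
  -- basic positivity
  have hz0 : (0:ℝ) < z := by linarith
  have hz1' : (0:ℝ) < z - 1 := by linarith
  have hsz : (0:ℝ) < s ^ z := Real.rpow_pos_of_pos hs0 z
  have hsnz : (0:ℝ) < s ^ (-z) := Real.rpow_pos_of_pos hs0 (-z)
  -- continuity / integrability facts
  have hconf : ContinuousOn (fun t : ℝ => t ^ (z - 1)) (Set.Icc 0 s) := by
    apply ContinuousOn.rpow_const continuousOn_id
    intro t _; right; exact hz1'.le
  have hconφ : ContinuousOn (fun t : ℝ => (1 - t) ^ (b - 1)) (Set.Icc 0 s) := by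
    apply ContinuousOn.rpow_const (continuous_const.sub continuous_id).continuousOn
    intro t ht
    left
    have : t ≤ s := ht.2
    intro h; simp at h; linarith
  have huIcc : Set.uIcc (0:ℝ) s = Set.Icc 0 s := Set.uIcc_of_le hs0.le
  have hint1 : IntervalIntegrable (fun t : ℝ => t ^ (z - 1) * (1 - t) ^ (b - 1))
      MeasureTheory.volume 0 s := by
    apply ContinuousOn.intervalIntegrable
    rw [huIcc]; exact hconf.mul hconφ
  have hintf : IntervalIntegrable (fun t : ℝ => t ^ (z - 1)) MeasureTheory.volume 0 s := by
    apply ContinuousOn.intervalIntegrable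
    rw [huIcc]; exact hconf
  have hintd : IntervalIntegrable (fun t : ℝ => t ^ (z - 1) * ((1 - t) ^ (b - 1) - L))
      MeasureTheory.volume 0 s := by
    have : (fun t : ℝ => t ^ (z - 1) * ((1 - t) ^ (b - 1) - L))
        = fun t => t ^ (z - 1) * (1 - t) ^ (b - 1) - L * t ^ (z - 1) := by
      funext t; ring
    rw [this]
    exact hint1.sub (hintf.const_mul L)
  have hinta : IntervalIntegrable (fun t : ℝ => t ^ (z - 1) * |(1 - t) ^ (b - 1) - L|)
      MeasureTheory.volume 0 s := by
    apply ContinuousOn.intervalIntegrable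
    rw [huIcc]
    exact hconf.mul (hconφ.sub continuousOn_const).abs
  -- value of the power integral
  have hpow : ∀ x : ℝ, 0 ≤ x → (∫ t in (0:ℝ)..x, t ^ (z - 1)) = x ^ z / z := by
    intro x hx
    rw [integral_rpow (Or.inl (by linarith))]
    rw [sub_add_cancel, Real.zero_rpow hz0.ne', sub_zero]
  -- rewrite the difference
  have hsinv : s ^ (-z) * s ^ z = 1 := by
    rw [← Real.rpow_add hs0]; simp
  have key : z * s ^ (-z) * incBeta s z b - L
      = z * s ^ (-z) * ∫ t in (0:ℝ)..s, t ^ (z - 1) * ((1 - t) ^ (b - 1) - L) := by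
    have hsplit : (∫ t in (0:ℝ)..s, t ^ (z - 1) * ((1 - t) ^ (b - 1) - L))
        = (∫ t in (0:ℝ)..s, t ^ (z - 1) * (1 - t) ^ (b - 1))
          - L * ∫ t in (0:ℝ)..s, t ^ (z - 1) := by
      rw [← intervalIntegral.integral_const_mul, ← intervalIntegral.integral_sub hint1
        (hintf.const_mul L)]
      congr 1; funext t; ring
    rw [hsplit, hpow s hs0.le, incBeta, mul_sub]
    have h2 : z * s ^ (-z) * (L * (s ^ z / z)) = L := by
      rw [show z * s ^ (-z) * (L * (s ^ z / z)) = L * (s ^ (-z) * s ^ z) * (z / z) by ring,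
        hsinv, div_self hz0.ne', mul_one, mul_one]
    rw [h2]
  -- estimate the integral
  have habs : |∫ t in (0:ℝ)..s, t ^ (z - 1) * ((1 - t) ^ (b - 1) - L)|
      ≤ ∫ t in (0:ℝ)..s, t ^ (z - 1) * |(1 - t) ^ (b - 1) - L| := by
    refine le_trans (intervalIntegral.abs_integral_le_integral_abs hs0.le) ?_
    apply intervalIntegral.integral_mono_on hs0.le hintd.abs hinta
    intro t ht
    rw [abs_mul, abs_of_nonneg (Real.rpow_nonneg ht.1 _)]
  have hintal : IntervalIntegrable (fun t : ℝ => t ^ (z - 1) * |(1 - t) ^ (b - 1) - L|)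
      MeasureTheory.volume 0 c :=
    hinta.mono_set (by rw [huIcc, Set.uIcc_of_le hc0]; exact Set.Icc_subset_Icc_right hcs.le)
  have hintar : IntervalIntegrable (fun t : ℝ => t ^ (z - 1) * |(1 - t) ^ (b - 1) - L|)
      MeasureTheory.volume c s :=
    hinta.mono_set (by rw [huIcc, Set.uIcc_of_le hcs.le]; exact Set.Icc_subset_Icc_left hc0)
  have hintfl : IntervalIntegrable (fun t : ℝ => t ^ (z - 1)) MeasureTheory.volume 0 c :=
    hintf.mono_set (by rw [huIcc, Set.uIcc_of_le hc0]; exact Set.Icc_subset_Icc_right hcs.le)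
  have hintfr : IntervalIntegrable (fun t : ℝ => t ^ (z - 1)) MeasureTheory.volume c s :=
    hintf.mono_set (by rw [huIcc, Set.uIcc_of_le hcs.le]; exact Set.Icc_subset_Icc_left hc0)
  have hsum : (∫ t in (0:ℝ)..s, t ^ (z - 1) * |(1 - t) ^ (b - 1) - L|)
      = (∫ t in (0:ℝ)..c, t ^ (z - 1) * |(1 - t) ^ (b - 1) - L|)
        + ∫ t in c..s, t ^ (z - 1) * |(1 - t) ^ (b - 1) - L| :=
    (intervalIntegral.integral_add_adjacent_intervals hintal hintar).symm
  have hleft : (∫ t in (0:ℝ)..c, t ^ (z - 1) * |(1 - t) ^ (b - 1) - L|)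
      ≤ 2 * M * (c ^ z / z) := by
    calc (∫ t in (0:ℝ)..c, t ^ (z - 1) * |(1 - t) ^ (b - 1) - L|)
        ≤ ∫ t in (0:ℝ)..c, t ^ (z - 1) * (2 * M) := by
          apply intervalIntegral.integral_mono_on hc0 hintal (hintfl.mul_const _)
          intro t ht
          have htI : t ∈ Set.Icc (0:ℝ) s := ⟨ht.1, le_trans ht.2 hcs.le⟩
          have h1 : |(1 - t) ^ (b - 1) - L| ≤ (1 - t) ^ (b - 1) + L := by
            refine le_trans (abs_sub _ _) ?_
            rw [abs_of_nonneg (Real.rpow_nonneg (by linarith [htI.2]) _),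
              abs_of_nonneg hL0]
          have := hφM t htI
          have h2 : |(1 - t) ^ (b - 1) - L| ≤ 2 * M := by linarith
          exact mul_le_mul_of_nonneg_left h2 (Real.rpow_nonneg ht.1 _)
      _ = 2 * M * (c ^ z / z) := by
          rw [intervalIntegral.integral_mul_const, hpow c hc0]; ring
  have hright : (∫ t in c..s, t ^ (z - 1) * |(1 - t) ^ (b - 1) - L|)
      ≤ ε / 2 * (s ^ z / z) := by
    calc (∫ t in c..s, t ^ (z - 1) * |(1 - t) ^ (b - 1) - L|)
        ≤ ∫ t in c..s, t ^ (z - 1) * (ε / 2) := by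
          apply intervalIntegral.integral_mono_on hcs.le hintar (hintfr.mul_const _)
          intro t ht
          exact mul_le_mul_of_nonneg_left (hnear t ht)
            (Real.rpow_nonneg (le_trans hc0 ht.1) _)
      _ = ε / 2 * ((s ^ z - c ^ z) / z) := by
          rw [intervalIntegral.integral_mul_const,
            integral_rpow (Or.inl (by linarith : (-1:ℝ) < z - 1)), sub_add_cancel]
          ring
      _ ≤ ε / 2 * (s ^ z / z) := by
          have hcz : 0 ≤ c ^ z := Real.rpow_nonneg hc0 _
          apply mul_le_mul_of_nonneg_left _ (by linarith : (0:ℝ) ≤ ε / 2)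
          gcongr
          linarith
  have hIb : |∫ t in (0:ℝ)..s, t ^ (z - 1) * ((1 - t) ^ (b - 1) - L)|
      ≤ 2 * M * (c ^ z / z) + ε / 2 * (s ^ z / z) := by
    refine le_trans habs ?_
    rw [hsum]; linarith
  rw [Real.dist_eq, key, abs_mul, abs_of_nonneg (mul_nonneg hz0.le hsnz.le)]
  have hmul : z * s ^ (-z) * (2 * M * (c ^ z / z) + ε / 2 * (s ^ z / z))
      = 2 * M * (c / s) ^ z + ε / 2 := by
    rw [Real.div_rpow hc0 hs0.le, Real.rpow_neg hs0.le]
    field_simp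
  calc z * s ^ (-z) * |∫ t in (0:ℝ)..s, t ^ (z - 1) * ((1 - t) ^ (b - 1) - L)|
      ≤ z * s ^ (-z) * (2 * M * (c ^ z / z) + ε / 2 * (s ^ z / z)) :=
        mul_le_mul_of_nonneg_left hIb (mul_nonneg hz0.le hsnz.le)
    _ = 2 * M * (c / s) ^ z + ε / 2 := hmul
    _ < ε := by linarith
end

section
/- Let 0 < q < 1/2, p = 1 - q, s = 4pq. Then I_s(z, 1/2) ~ s^z / √(π(1-s)z) as z → +∞; in particular I_s(z,1/2) decays exponentially in z. -/
/-!
Since `Γ(1/2) = √π`, the quotient factors as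
`Γ(z + 1/2) / (Γ z √z) · (z ∫₀ˢ t^(z-1) (1-t)^(-1/2) dt / s^z) · √(1-s)`.
Log-convexity of `Γ` on `[z, z+1]` and on `[z+1/2, z+3/2]` traps the first factor between
`√(z / (z + 1/2))` and `1` (Gautschi's inequality). In the second, `z t^(z-1) / s^z` is a probability
density on `[0, s]` whose mean distance to `s` is `s / (z + 1)`; as `(1-t)^(-1/2)` is Lipschitz on
`[0, s]`, the second factor is `(1-s)^(-1/2) + O(1/z)`.
-/

open Filter Real

open Set MeasureTheory Topology

theorem Real.Gamma_add_half_le {x : ℝ} (hx : 0 < x) : Gamma (x + 1 / 2) ≤ Gamma x * √x := by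
  have hG := Gamma_pos_of_pos hx
  have h := Gamma_mul_add_mul_le_rpow_Gamma_mul_rpow_Gamma hx (by linarith : 0 < x + 1)
    one_half_pos one_half_pos (by norm_num)
  rw [Gamma_add_one hx.ne', ← sqrt_eq_rpow, ← sqrt_eq_rpow, ← sqrt_mul hG.le,
    show Gamma x * (x * Gamma x) = Gamma x ^ 2 * x by ring, sqrt_mul (sq_nonneg _),
    sqrt_sq hG.le] at h
  calc Gamma (x + 1 / 2) = Gamma (1 / 2 * x + 1 / 2 * (x + 1)) := by ring_nf
    _ ≤ Gamma x * √x := h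

theorem Real.tendsto_Gamma_add_half_div_Gamma_mul_sqrt :
    Tendsto (fun x => Gamma (x + 1 / 2) / (Gamma x * √x)) atTop (𝓝 1) := by
  have h_frac : Tendsto (fun x : ℝ => x / (x + 1 / 2)) atTop (𝓝 1) := by
    have h := (tendsto_const_nhds (x := (1 / 2 : ℝ)).div_atTop tendsto_id).const_add 1
    rw [add_zero] at h
    rw [← inv_one]
    refine (h.inv₀ one_ne_zero).congr' ?_
    filter_upwards [eventually_gt_atTop 0] with x hx
    simp only [id]
    field_simp
  have h_lower : Tendsto (fun x : ℝ => √(x / (x + 1 / 2))) atTop (𝓝 1) := by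
    simpa using h_frac.sqrt
  refine tendsto_of_tendsto_of_tendsto_of_le_of_le' h_lower tendsto_const_nhds ?_ ?_
  · filter_upwards [eventually_gt_atTop 0] with x hx
    have h := Gamma_add_half_le (by linarith : 0 < x + 1 / 2)
    rw [show x + 1 / 2 + 1 / 2 = x + 1 by ring, Gamma_add_one hx.ne'] at h
    rw [sqrt_div hx.le, div_le_div_iff₀ (by positivity) (by positivity)]
    calc √x * (Gamma x * √x) = x * Gamma x := by rw [mul_left_comm, mul_self_sqrt hx.le, mul_comm]
      _ ≤ _ := h
  · filter_upwards [eventually_gt_atTop 0] with x hx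
    rw [div_le_one (by positivity)]
    exact Gamma_add_half_le hx

theorem integral_rpow_sub_one {z : ℝ} (hz : 0 < z) (b : ℝ) :
    ∫ t in (0 : ℝ)..b, t ^ (z - 1) = b ^ z / z := by
  rw [integral_rpow (Or.inl (by linarith)), sub_add_cancel, zero_rpow hz.ne', sub_zero]

theorem abs_inv_sqrt_sub_inv_sqrt_le {x y : ℝ} (hx : 0 < x) (hxy : x ≤ y) :
    |(√y)⁻¹ - (√x)⁻¹| ≤ (√x ^ 3)⁻¹ * (y - x) := by
  have ha : 0 < √x := sqrt_pos.2 hx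
  have hab : √x ≤ √y := sqrt_le_sqrt hxy
  have hb : 0 < √y := ha.trans_le hab
  have hyx : y - x = √y ^ 2 - √x ^ 2 := by rw [sq_sqrt hx.le, sq_sqrt (hx.le.trans hxy)]
  rw [abs_sub_comm, abs_of_nonneg (sub_nonneg.2 (inv_anti₀ ha hab)), hyx, ← sub_nonneg]
  have h_eq : (√x ^ 3)⁻¹ * (√y ^ 2 - √x ^ 2) - ((√x)⁻¹ - (√y)⁻¹)
      = (√y - √x) * (√y * (√y + √x) - √x ^ 2) / (√x ^ 3 * √y) := by
    field_simp
    ring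
  rw [h_eq]
  exact div_nonneg (mul_nonneg (sub_nonneg.2 hab) (by nlinarith)) (by positivity)

theorem tendsto_mul_integral_rpow_mul_div_rpow {f : ℝ → ℝ} {s C : ℝ} (hs : 0 < s)
    (hf : IntervalIntegrable f volume 0 s) (hfs : ∀ t ∈ Icc 0 s, |f t - f s| ≤ C * (s - t)) :
    Tendsto (fun z => z * (∫ t in (0 : ℝ)..s, t ^ (z - 1) * f t) / s ^ z) atTop (𝓝 (f s)) := by
  rw [tendsto_iff_norm_sub_tendsto_zero]
  have h_bound : Tendsto (fun z : ℝ => C * s / (z + 1)) atTop (𝓝 0) :=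
    tendsto_const_nhds.div_atTop (tendsto_atTop_add_const_right _ 1 tendsto_id)
  refine squeeze_zero' (Eventually.of_forall fun _ => norm_nonneg _) ?_ h_bound
  filter_upwards [eventually_ge_atTop 1] with z hz
  have hz0 : 0 < z := by linarith
  have h_cont : Continuous fun t : ℝ => t ^ (z - 1) := continuous_rpow_const (by linarith)
  have h_cont' : Continuous fun t : ℝ => t ^ (z + 1 - 1) := continuous_rpow_const (by linarith)
  have h_split : (∫ t in (0 : ℝ)..s, t ^ (z - 1) * f t) - f s * (s ^ z / z)
      = ∫ t in (0 : ℝ)..s, t ^ (z - 1) * (f t - f s) := by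
    rw [← integral_rpow_sub_one hz0, ← intervalIntegral.integral_const_mul,
      ← intervalIntegral.integral_sub (hf.continuousOn_mul h_cont.continuousOn)
        ((h_cont.intervalIntegrable _ _).const_mul _)]
    simp only [mul_sub, mul_comm (f s)]
  have h_est : ‖∫ t in (0 : ℝ)..s, t ^ (z - 1) * (f t - f s)‖
      ≤ C * (s ^ (z + 1) / (z * (z + 1))) :=
    calc ‖∫ t in (0 : ℝ)..s, t ^ (z - 1) * (f t - f s)‖
        ≤ ∫ t in (0 : ℝ)..s, C * (s * t ^ (z - 1) - t ^ (z + 1 - 1)) := by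
          refine intervalIntegral.norm_integral_le_of_norm_le hs.le (ae_of_all _ fun t ht => ?_)
            (((h_cont.const_mul s).sub h_cont').const_mul C |>.intervalIntegrable _ _)
          have h_pow : t ^ (z + 1 - 1) = t ^ (z - 1) * t := by
            rw [show z + 1 - 1 = z - 1 + 1 by ring, rpow_add_one ht.1.ne']
          have h_nonneg : 0 ≤ t ^ (z - 1) := rpow_nonneg ht.1.le _
          rw [norm_mul, Real.norm_eq_abs, Real.norm_eq_abs, abs_of_nonneg h_nonneg, h_pow]
          calc t ^ (z - 1) * |f t - f s| ≤ t ^ (z - 1) * (C * (s - t)) :=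
                mul_le_mul_of_nonneg_left (hfs t ⟨ht.1.le, ht.2⟩) h_nonneg
            _ = C * (s * t ^ (z - 1) - t ^ (z - 1) * t) := by ring
      _ = C * (s * (s ^ z / z) - s ^ (z + 1) / (z + 1)) := by
          rw [intervalIntegral.integral_const_mul, intervalIntegral.integral_sub
            ((h_cont.intervalIntegrable _ _).const_mul _) (h_cont'.intervalIntegrable _ _),
            intervalIntegral.integral_const_mul, integral_rpow_sub_one hz0,
            integral_rpow_sub_one (by linarith)]
      _ = C * (s ^ (z + 1) / (z * (z + 1))) := by
          rw [rpow_add_one hs.ne']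
          field_simp
          ring
  have h_diff : z * (∫ t in (0 : ℝ)..s, t ^ (z - 1) * f t) / s ^ z - f s
      = z / s ^ z * ((∫ t in (0 : ℝ)..s, t ^ (z - 1) * f t) - f s * (s ^ z / z)) := by
    field_simp
  calc ‖z * (∫ t in (0 : ℝ)..s, t ^ (z - 1) * f t) / s ^ z - f s‖
      ≤ z / s ^ z * (C * (s ^ (z + 1) / (z * (z + 1)))) := by
        rw [h_diff, h_split, norm_mul, Real.norm_of_nonneg (by positivity)]
        exact mul_le_mul_of_nonneg_left h_est (by positivity)
    _ = C * s / (z + 1) := by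
        rw [rpow_add_one hs.ne']
        field_simp

theorem rpow_half_sub_one {x : ℝ} (hx : 0 ≤ x) : x ^ ((1 : ℝ) / 2 - 1) = (√x)⁻¹ := by
  rw [show (1 : ℝ) / 2 - 1 = -(1 / 2) by norm_num, rpow_neg hx, sqrt_eq_rpow]

theorem tendsto_mul_integral_rpow_mul_one_sub_rpow_div_rpow {s : ℝ} (hs0 : 0 < s) (hs1 : s < 1) :
    Tendsto (fun z => z * (∫ t in (0 : ℝ)..s, t ^ (z - 1) * (1 - t) ^ ((1 : ℝ) / 2 - 1)) / s ^ z)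
      atTop (𝓝 (√(1 - s))⁻¹) := by
  have h_int : IntervalIntegrable (fun t : ℝ => (1 - t) ^ ((1 : ℝ) / 2 - 1)) volume 0 s := by
    refine ContinuousOn.intervalIntegrable ((continuousOn_const.sub continuousOn_id).rpow_const
      fun t ht => Or.inl ?_)
    rw [uIcc_of_le hs0.le] at ht
    exact (sub_pos.2 (ht.2.trans_lt hs1)).ne'
  rw [← rpow_half_sub_one (sub_pos.2 hs1).le]
  refine tendsto_mul_integral_rpow_mul_div_rpow (C := (√(1 - s) ^ 3)⁻¹) hs0 h_int fun t ht => ?_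
  rw [rpow_half_sub_one (by linarith [ht.2]), rpow_half_sub_one (by linarith),
    show s - t = 1 - t - (1 - s) by ring]
  exact abs_inv_sqrt_sub_inv_sqrt_le (by linarith) (by linarith [ht.2])

theorem stmt8 (q : ℝ) (hq0 : 0 < q) (hq1 : q < 1/2) (p s : ℝ)
    (hp : p = 1 - q) (hs : s = 4 * p * q) :
    Tendsto (fun z : ℝ =>
        regIncBeta s z (1/2) / (s ^ z / Real.sqrt (π * (1 - s) * z)))
      atTop (nhds 1) := by
  have hs0 : 0 < s := by rw [hs, hp]; nlinarith
  have hs1 : s < 1 := by rw [hs, hp]; nlinarith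
  have h1s : 0 < √(1 - s) := sqrt_pos.2 (sub_pos.2 hs1)
  have h := tendsto_Gamma_add_half_div_Gamma_mul_sqrt.mul
    ((tendsto_mul_integral_rpow_mul_one_sub_rpow_div_rpow hs0 hs1).mul_const √(1 - s))
  rw [one_mul, inv_mul_cancel₀ h1s.ne'] at h
  refine h.congr' ?_
  filter_upwards [eventually_gt_atTop 0] with z hz
  rw [regIncBeta, Gamma_one_half_eq, sqrt_mul' _ hz.le, sqrt_mul pi_pos.le]
  field_simp
  rw [sq_sqrt hz.le]
end

section
/- For fixed λ > 1, as z → +∞: Q(z, λz) ~ (1/(λ-1)) · (1/√(2πz)) · e^{-z(λ - 1 - log λ)}, where Q(z,x) = Γ(z,x)/Γ(z). -/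
/-!
Substituting `t = λz + u` gives `Γ(z, λz) = (λz)^(z-1) e^(-λz) ∫₀^∞ (1 + u/(λz))^(z-1) e^(-u) du`.
For `z ≥ 1` the integrand is at most `e^(-(1 - 1/λ)u)`, its pointwise limit, so by dominated
convergence the integral tends to `λ/(λ-1)`. Dividing by Stirling's formula
`Γ(z) ~ √(2π/z) (z/e)^z` gives the claim.

Stirling's formula for real `z` comes from the factorial case: log-convexity of `Γ` traps
`log Γ(n + x)`, `0 ≤ x ≤ 1`, between the chords of `log Γ` through `n - 1`, `n`, `n + 1`, so
Binet's function `μ(z) = log Γ(z) - (z - 1/2) log z + z - log(2π)/2` moves by `O(1/n)` between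
`⌊z⌋` and `z`.
-/

open Filter Real MeasureTheory

/-- Upper incomplete gamma function. -/
noncomputable def upperGamma (z x : ℝ) : ℝ :=
  ∫ t in Set.Ioi x, t ^ (z - 1) * Real.exp (-t)

/-- Regularized upper incomplete gamma function. -/
noncomputable def regGammaQ (z x : ℝ) : ℝ := upperGamma z x / Real.Gamma z

open Set Topology Asymptotics

noncomputable def binet (z : ℝ) : ℝ :=
  log (Gamma z) - ((z - 1 / 2) * log z - z + log (2 * π) / 2)

lemma log_Gamma_natCast_add_sub_mem_Icc {n : ℕ} (hn : 2 ≤ n) {x : ℝ} (hx₀ : 0 ≤ x)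
    (hx₁ : x ≤ 1) :
    log (Gamma (n + x)) - log (Gamma n) ∈ Icc (x * log (n - 1)) (x * log n) := by
  rcases hx₀.eq_or_lt with rfl | hx
  · simp
  have hfeq {y : ℝ} (hy : 0 < y) : (log ∘ Gamma) (y + 1) = (log ∘ Gamma) y + log y := by
    simp only [Function.comp_apply, Gamma_add_one hy.ne',
      log_mul hy.ne' (Gamma_pos_of_pos hy).ne', add_comm]
  have hge := BohrMollerup.f_add_nat_ge convexOn_log_Gamma hfeq hn hx
  have hle := BohrMollerup.f_add_nat_le (n := n) convexOn_log_Gamma hfeq (by omega) hx hx₁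
  simp only [Function.comp_apply] at hge hle
  constructor <;> linarith

lemma abs_mul_log_add_sub_log_sub_le {n x : ℝ} (hn : 1 / 2 ≤ n) (hx₀ : 0 ≤ x) (hx₁ : x ≤ 1) :
    |(n + x - 1 / 2) * (log (n + x) - log n) - x| ≤ 1 / (2 * n) := by
  have hn₀ : 0 < n := by linarith
  have hnx : 0 < n + x := by linarith
  have hL : log (n + x) - log n = log ((n + x) / n) := (log_div hnx.ne' hn₀.ne').symm
  have hup : log (n + x) - log n ≤ x / n := by
    have := log_le_sub_one_of_pos (div_pos hnx hn₀)
    rw [hL]; convert this using 1; field_simp; ring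
  have hlo : x / (n + x) ≤ log (n + x) - log n := by
    have := one_sub_inv_le_log_of_pos (div_pos hnx hn₀)
    rw [hL]; convert this using 1; field_simp; ring
  have hc : 0 ≤ n + x - 1 / 2 := by linarith
  rw [abs_le]
  constructor
  · have h := mul_le_mul_of_nonneg_left hlo hc
    have : (n + x - 1 / 2) * (x / (n + x)) - x = -(x / (2 * (n + x))) := by field_simp; ring
    have : x / (2 * (n + x)) ≤ 1 / (2 * n) := by
      rw [div_le_div_iff₀ (by positivity) (by positivity)]; nlinarith
    linarith
  · have h := mul_le_mul_of_nonneg_left hup hc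
    have : (n + x - 1 / 2) * (x / n) - x = x * (x - 1 / 2) / n := by field_simp; ring
    have : x * (x - 1 / 2) / n ≤ 1 / (2 * n) := by
      rw [div_le_div_iff₀ hn₀ (by positivity)]
      nlinarith [mul_nonneg (mul_nonneg (by linarith : 0 ≤ 2 * x + 1) (sub_nonneg.2 hx₁)) hn₀.le]
    linarith

lemma abs_binet_natCast_add_sub_le {n : ℕ} (hn : 2 ≤ n) {x : ℝ} (hx₀ : 0 ≤ x) (hx₁ : x ≤ 1) :
    |binet (n + x) - binet n| ≤ 2 / (n - 1) := by
  have hn' : (2 : ℝ) ≤ n := by exact_mod_cast hn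
  have hn₁ : (0 : ℝ) < n - 1 := by linarith
  obtain ⟨hG₁, hG₂⟩ := log_Gamma_natCast_add_sub_mem_Icc hn hx₀ hx₁
  have hH := abs_mul_log_add_sub_log_sub_le (n := n) (by linarith) hx₀ hx₁
  have hlog : log n - log (n - 1) ≤ 1 / (n - 1) := by
    have := log_le_sub_one_of_pos (div_pos (by linarith) hn₁ : (0 : ℝ) < n / (n - 1))
    rw [log_div (by linarith) hn₁.ne'] at this
    convert this using 1; field_simp; ring
  have hlog₀ : 0 ≤ log n - log (n - 1) := sub_nonneg.2 (log_le_log (by linarith) (by linarith))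
  have hsplit : binet (n + x) - binet n = (log (Gamma (n + x)) - log (Gamma n) - x * log n) -
      ((n + x - 1 / 2) * (log (n + x) - log n) - x) := by
    unfold binet; ring
  have h2n : 1 / (2 * (n : ℝ)) ≤ 1 / (n - 1) := one_div_le_one_div_of_le hn₁ (by linarith)
  have hG : -(1 / (n - 1)) ≤ log (Gamma (n + x)) - log (Gamma n) - x * log n := by
    nlinarith [mul_le_mul_of_nonneg_right hx₁ hlog₀]
  have htwo : 2 / ((n : ℝ) - 1) = 1 / (n - 1) + 1 / (n - 1) := by ring
  rw [abs_le] at hH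
  rw [hsplit, abs_le, htwo]
  constructor <;> linarith [hH.1, hH.2]

lemma tendsto_binet_natCast : Tendsto (fun n : ℕ => binet n) atTop (𝓝 0) := by
  have h := (Stirling.tendsto_stirlingSeq_sqrt_pi.log (by positivity)).sub_const (log √π)
  rw [sub_self] at h
  refine h.congr' ?_
  filter_upwards [eventually_ge_atTop 1] with n hn
  have hn₀ : (0 : ℝ) < n := by exact_mod_cast hn
  have hfac : log (n.factorial : ℝ) = log (Gamma n) + log n := by
    rw [← Gamma_nat_eq_factorial, Gamma_add_one hn₀.ne',
      log_mul hn₀.ne' (Gamma_pos_of_pos hn₀).ne', add_comm]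
  rw [Stirling.log_stirlingSeq_formula, hfac, binet, log_mul two_ne_zero hn₀.ne',
    log_div hn₀.ne' (exp_pos 1).ne', log_exp, log_sqrt pi_pos.le,
    log_mul two_ne_zero pi_pos.ne']
  ring

lemma tendsto_binet : Tendsto binet atTop (𝓝 0) := by
  have hfloor : Tendsto (fun z : ℝ => binet ⌊z⌋₊) atTop (𝓝 0) :=
    tendsto_binet_natCast.comp tendsto_nat_floor_atTop
  have hbound : Tendsto (fun z : ℝ => 2 / ((⌊z⌋₊ : ℝ) - 1)) atTop (𝓝 0) :=
    (tendsto_const_nhds.div_atTop (tendsto_atTop_add_const_right _ (-1)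
      tendsto_natCast_atTop_atTop)).comp tendsto_nat_floor_atTop
  have hdiff : Tendsto (fun z : ℝ => binet z - binet ⌊z⌋₊) atTop (𝓝 0) := by
    refine squeeze_zero_norm' ?_ hbound
    filter_upwards [eventually_ge_atTop 2] with z hz
    have hn : 2 ≤ ⌊z⌋₊ := Nat.le_floor (by exact_mod_cast hz)
    have hx₀ : 0 ≤ z - ⌊z⌋₊ := sub_nonneg.2 (Nat.floor_le (by linarith))
    have hx₁ : z - ⌊z⌋₊ ≤ 1 := by linarith [Nat.lt_floor_add_one z]
    simpa using abs_binet_natCast_add_sub_le hn hx₀ hx₁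
  simpa using hfloor.add hdiff

theorem Gamma_isEquivalent_stirling :
    Gamma ~[atTop] fun z => √(2 * π / z) * (z / exp 1) ^ z := by
  refine isEquivalent_of_tendsto_one ?_
  have h := tendsto_binet.rexp
  rw [exp_zero] at h
  refine h.congr' ?_
  filter_upwards [eventually_gt_atTop 0] with z hz
  have hstirling :
      √(2 * π / z) * (z / exp 1) ^ z = exp ((z - 1 / 2) * log z - z + log (2 * π) / 2) := by
    rw [sqrt_eq_rpow, rpow_def_of_pos (by positivity), rpow_def_of_pos (by positivity),
      ← exp_add, log_div (by positivity) hz.ne', log_div hz.ne' (exp_pos 1).ne', log_exp]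
    ring_nf
  rw [Pi.div_apply, hstirling, binet, exp_sub, exp_log (Gamma_pos_of_pos hz)]

lemma upperGamma_eq_mul_integral (z : ℝ) {x : ℝ} (hx : 0 < x) :
    upperGamma z x = x ^ (z - 1) * exp (-x) * ∫ u in Ioi 0, (1 + u / x) ^ (z - 1) * exp (-u) := by
  have hshift : upperGamma z x = ∫ u in Ioi 0, (u + x) ^ (z - 1) * exp (-(u + x)) := by
    rw [upperGamma, ← (measurePreserving_add_right volume x).setIntegral_preimage_emb
      (measurableEmbedding_addRight x), preimage_add_const_Ioi, sub_self]
  rw [hshift, ← integral_const_mul]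
  refine setIntegral_congr_fun measurableSet_Ioi fun u hu => ?_
  have hu : (0 : ℝ) < u := hu
  have hux : u + x = x * (1 + u / x) := by field_simp; ring
  rw [hux, mul_rpow hx.le (by positivity), ← hux, neg_add, exp_add]
  ring

lemma tendsto_one_add_div_rpow_sub_one_exp (t : ℝ) :
    Tendsto (fun z : ℝ => (1 + t / z) ^ (z - 1)) atTop (𝓝 (exp t)) := by
  have hbase : Tendsto (fun z : ℝ => 1 + t / z) atTop (𝓝 1) := by
    simpa using (tendsto_const_nhds (x := (1 : ℝ))).add
      ((tendsto_const_nhds (x := t)).div_atTop tendsto_id)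
  have h := (tendsto_one_add_div_rpow_exp t).div hbase one_ne_zero
  rw [div_one] at h
  refine h.congr' ?_
  filter_upwards [hbase.eventually_const_lt zero_lt_one] with z hz
  rw [Pi.div_apply, rpow_sub_one hz.ne']

lemma one_add_rpow_le_exp_mul {t p : ℝ} (ht : 0 ≤ t) (hp : 0 ≤ p) : (1 + t) ^ p ≤ exp (t * p) := by
  rw [exp_mul]
  exact rpow_le_rpow (by linarith) (by linarith [add_one_le_exp t]) hp

lemma tendsto_integral_one_add_div_rpow_mul_exp_neg {c : ℝ} (hc₀ : 0 ≤ c) (hc₁ : c < 1) :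
    Tendsto (fun z : ℝ => ∫ u in Ioi 0, (1 + c * u / z) ^ (z - 1) * exp (-u)) atTop
      (𝓝 (1 - c)⁻¹) := by
  have hb : 0 < 1 - c := by linarith
  have hval : ∫ u in Ioi (0 : ℝ), exp (-(1 - c) * u) = (1 - c)⁻¹ := by
    rw [integral_exp_mul_Ioi (by linarith), mul_zero, exp_zero, neg_div_neg_eq, one_div]
  rw [← hval]
  refine tendsto_integral_filter_of_dominated_convergence _ ?_ ?_
    (exp_neg_integrableOn_Ioi 0 hb) ?_
  · exact Eventually.of_forall fun z => (by fun_prop : Measurable _).aestronglyMeasurable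
  · filter_upwards [eventually_ge_atTop 1] with z hz
    refine (ae_restrict_mem measurableSet_Ioi).mono fun u (hu : 0 < u) => ?_
    have hcu : 0 ≤ c * u / z := by positivity
    rw [norm_of_nonneg (by positivity)]
    calc (1 + c * u / z) ^ (z - 1) * exp (-u) ≤ exp (c * u / z * (z - 1)) * exp (-u) := by
          gcongr; exact one_add_rpow_le_exp_mul hcu (by linarith)
      _ ≤ exp (c * u) * exp (-u) := by
          gcongr ?_ * _
          rw [exp_le_exp, div_mul_eq_mul_div, div_le_iff₀ (by linarith)]
          nlinarith [mul_nonneg hc₀ hu.le]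
      _ = exp (-(1 - c) * u) := by rw [← exp_add]; ring_nf
  · refine Eventually.of_forall fun u => ?_
    have h := (tendsto_one_add_div_rpow_sub_one_exp (c * u)).mul_const (exp (-u))
    rwa [← exp_add, show c * u + -u = -(1 - c) * u by ring] at h

lemma upperGamma_mul_isEquivalent {lam : ℝ} (h : 1 < lam) :
    (fun z => upperGamma z (lam * z)) ~[atTop]
      fun z => (lam * z) ^ (z - 1) * exp (-(lam * z)) * (1 - lam⁻¹)⁻¹ := by
  have hlam : 0 < lam := by linarith
  have hc₁ : lam⁻¹ < 1 := inv_lt_one_of_one_lt₀ h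
  have hI := tendsto_integral_one_add_div_rpow_mul_exp_neg (inv_nonneg.2 hlam.le) hc₁
  refine (IsEquivalent.refl.mul ((isEquivalent_const_iff_tendsto
    (inv_ne_zero (sub_pos.2 hc₁).ne')).2 hI)).congr_left ?_
  filter_upwards [eventually_gt_atTop 0] with z hz
  have hu (u : ℝ) : u / (lam * z) = lam⁻¹ * u / z := by field_simp
  simp only [Pi.mul_apply, upperGamma_eq_mul_integral z (mul_pos hlam hz), hu]

lemma rpow_mul_exp_neg_div_stirling_eq {lam z : ℝ} (hlam : 0 < lam) (hz : 0 < z) :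
    (lam * z) ^ (z - 1) * exp (-(lam * z)) * (1 - lam⁻¹)⁻¹ / (√(2 * π / z) * (z / exp 1) ^ z) =
      1 / (lam - 1) * (1 / √(2 * π * z)) * exp (-z * (lam - 1 - log lam)) := by
  have hsqrt : √(2 * π * z) = √(2 * π / z) * z := by
    rw [show 2 * π * z = 2 * π / z * z ^ 2 by field_simp, sqrt_mul (by positivity),
      sqrt_sq hz.le]
  have hexp : exp (-z * (lam - 1 - log lam)) = lam ^ z * exp (-(lam * z)) * exp z := by
    rw [rpow_def_of_pos hlam, ← exp_add, ← exp_add]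
    ring_nf
  have hpow : (lam * z) ^ (z - 1) = lam ^ z * z ^ z / (lam * z) := by
    rw [rpow_sub_one (by positivity), mul_rpow hlam.le hz.le]
  have hdiv : (z / exp 1) ^ z = z ^ z / exp z := by
    rw [div_rpow hz.le (exp_pos 1).le, exp_one_rpow]
  have hinv : (1 - lam⁻¹)⁻¹ = lam / (lam - 1) := by field_simp
  rw [hsqrt, hexp, hpow, hdiv, hinv]
  field_simp

theorem stmt11 (lam : ℝ) (h1 : 1 < lam) :
    Tendsto (fun z : ℝ =>
        (regGammaQ z (lam * z)) /
          ((1 / (lam - 1)) * (1 / Real.sqrt (2 * π * z)) *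
            Real.exp (-z * (lam - 1 - Real.log lam))))
      atTop (nhds 1) := by
  apply (isEquivalent_iff_tendsto_one ?_).1
  · refine ((upperGamma_mul_isEquivalent h1).div Gamma_isEquivalent_stirling).congr_right ?_
    filter_upwards [eventually_gt_atTop 0] with z hz
    exact rpow_mul_exp_neg_div_stirling_eq (by linarith) hz
  · filter_upwards [eventually_gt_atTop 0] with z hz
    positivity
end

section
/- (Gautschi-type inequality) For every real z > 0: √(z/(z + 1/2)) ≤ Γ(z + 1/2)/(√z · Γ(z)) ≤ 1. -/
open Real

theorem stmt14 (z : ℝ) (hz : 0 < z) :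
    Real.sqrt (z / (z + 1/2)) ≤ Real.Gamma (z + 1/2) / (Real.sqrt z * Real.Gamma z)
    ∧ Real.Gamma (z + 1/2) / (Real.sqrt z * Real.Gamma z) ≤ 1 := by
  have hzh : (0:ℝ) < z + 1/2 := by linarith
  have hG : 0 < Real.Gamma z := Real.Gamma_pos_of_pos hz
  have hGh : 0 < Real.Gamma (z + 1/2) := Real.Gamma_pos_of_pos hzh
  have hs : 0 < Real.sqrt z := Real.sqrt_pos.mpr hz
  have hsh : 0 < Real.sqrt (z + 1/2) := Real.sqrt_pos.mpr hzh
  have hG1 : Real.Gamma (z + 1) = z * Real.Gamma z := Real.Gamma_add_one hz.ne'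
  -- upper bound: Γ(z+1/2) ≤ √z Γ(z)
  have hup : Real.Gamma (z + 1/2) ≤ Real.sqrt z * Real.Gamma z := by
    have h := Real.Gamma_mul_add_mul_le_rpow_Gamma_mul_rpow_Gamma hz
      (by linarith : (0:ℝ) < z + 1) (by norm_num : (0:ℝ) < (1/2:ℝ))
      (by norm_num : (0:ℝ) < (1/2:ℝ)) (by norm_num)
    have e1 : (1/2:ℝ) * z + 1/2 * (z + 1) = z + 1/2 := by ring
    rw [e1, hG1] at h
    calc Real.Gamma (z + 1/2) ≤ Real.Gamma z ^ (1/2:ℝ) * (z * Real.Gamma z) ^ (1/2:ℝ) := h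
      _ = Real.sqrt z * Real.Gamma z := by
          rw [Real.mul_rpow hz.le hG.le, ← Real.sqrt_eq_rpow, ← Real.sqrt_eq_rpow,
            show Real.sqrt (Real.Gamma z) * (Real.sqrt z * Real.sqrt (Real.Gamma z)) =
              Real.sqrt z * (Real.sqrt (Real.Gamma z) * Real.sqrt (Real.Gamma z)) by ring,
            Real.mul_self_sqrt hG.le]
  -- lower bound: z Γ(z) ≤ √(z+1/2) Γ(z+1/2)
  have hlo : z * Real.Gamma z ≤ Real.sqrt (z + 1/2) * Real.Gamma (z + 1/2) := by
    have h := Real.Gamma_mul_add_mul_le_rpow_Gamma_mul_rpow_Gamma hzh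
      (by linarith : (0:ℝ) < z + 3/2) (by norm_num : (0:ℝ) < (1/2:ℝ))
      (by norm_num : (0:ℝ) < (1/2:ℝ)) (by norm_num)
    have e1 : (1/2:ℝ) * (z + 1/2) + 1/2 * (z + 3/2) = z + 1 := by ring
    have hG2 : Real.Gamma (z + 3/2) = (z + 1/2) * Real.Gamma (z + 1/2) := by
      have := Real.Gamma_add_one hzh.ne'
      rw [show z + 1/2 + 1 = z + 3/2 by ring] at this
      exact this
    rw [e1, hG1, hG2] at h
    calc z * Real.Gamma z
        ≤ Real.Gamma (z+1/2) ^ (1/2:ℝ) * ((z+1/2) * Real.Gamma (z+1/2)) ^ (1/2:ℝ) := h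
      _ = Real.sqrt (z + 1/2) * Real.Gamma (z + 1/2) := by
          rw [Real.mul_rpow hzh.le hGh.le, ← Real.sqrt_eq_rpow, ← Real.sqrt_eq_rpow,
          ]
          rw [show Real.sqrt (Real.Gamma (z+1/2)) * (Real.sqrt (z+1/2) *
            Real.sqrt (Real.Gamma (z+1/2))) = Real.sqrt (z+1/2) *
            (Real.sqrt (Real.Gamma (z+1/2)) * Real.sqrt (Real.Gamma (z+1/2))) by ring,
            Real.mul_self_sqrt hGh.le]
  constructor
  · rw [show z / (z + 1/2) = z / (z + 1/2) from rfl, Real.sqrt_div hz.le,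
      div_le_div_iff₀ hsh (by positivity)]
    have h1 : Real.sqrt z * Real.sqrt z = z := Real.mul_self_sqrt hz.le
    nlinarith [hlo]
  · rw [div_le_one (by positivity)]
    exact hup
end

section
/- For every 0 < λ < 1 and every integer z ≥ 1: 1 - Q(z, λz) < (1/(1-λ)) · (1/√(2πz)) · e^{-z(λ - 1 - log λ)}, where Q(z,x) = Γ(z,x)/Γ(z); moreover for the lower incomplete gamma function, γ(z, λz) ≤ λ^z z^{z-1} e^{-λz}/(1-λ). -/
open Real MeasureTheory

/-- Lower incomplete gamma function. -/
noncomputable def lowerGamma (z x : ℝ) : ℝ :=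
  ∫ t in (0:ℝ)..x, t ^ (z - 1) * Real.exp (-t)

/-! On `(0, x]` with `x < a`, the factor `t ^ x * exp (-t)` of the integrand is largest at `t = x`,
so `γ(a, x) ≤ x ^ x e^{-x} ∫₀ˣ t ^ (a - 1 - x) dt = x ^ a e^{-x} / (a - x)`; at `x = λ z` this is the
second inequality. Dividing by `Γ(z)` and using `z Γ(z) = z!` together with the strict Stirling bound
`√(2πz) (z/e)^z < z!` (the Stirling sequence decreases strictly to `√π`) gives the first. -/

namespace Stirling

theorem stirlingSeq_succ_succ_lt (n : ℕ) : stirlingSeq (n + 2) < stirlingSeq (n + 1) := by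
  have hlog : Real.log (stirlingSeq (n + 2)) < Real.log (stirlingSeq (n + 1)) :=
    sub_pos.mp <| hasSum_lt (f := 0) (i := 0) (fun _ => by positivity) (by positivity)
      hasSum_zero (log_stirlingSeq_sdiff_hasSum n)
  exact (Real.log_lt_log_iff (stirlingSeq'_pos _) (stirlingSeq'_pos _)).mp hlog

theorem sqrt_pi_lt_stirlingSeq {n : ℕ} (hn : n ≠ 0) : √π < stirlingSeq n := by
  obtain ⟨m, rfl⟩ := Nat.exists_eq_succ_of_ne_zero hn
  exact (sqrt_pi_le_stirlingSeq (m + 1).succ_ne_zero).trans_lt (stirlingSeq_succ_succ_lt m)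

theorem lt_factorial_stirling {n : ℕ} (hn : n ≠ 0) :
    √(2 * π * n) * (n / exp 1) ^ n < n.factorial := by
  have : √(2 * π * n) * (n / exp 1) ^ n = √π * (√(2 * n) * (n / exp 1) ^ n) := by
    simp only [Nat.cast_nonneg, sqrt_mul', Nat.ofNat_nonneg, sqrt_mul]
    ring
  rw [this, ← lt_div_iff₀ (by positivity)]
  exact sqrt_pi_lt_stirlingSeq hn

end Stirling

theorem natCast_rpow_sub_one_div_Gamma_lt {n : ℕ} (hn : n ≠ 0) :
    (n : ℝ) ^ ((n : ℝ) - 1) / Real.Gamma n < exp n / √(2 * π * n) := by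
  have hn0 : (0 : ℝ) < n := by positivity
  have hfact : (n : ℝ) * Real.Gamma n = n.factorial := by
    rw [← Real.Gamma_add_one hn0.ne', ← Real.Gamma_nat_eq_factorial]
  have hstir := Stirling.lt_factorial_stirling hn
  rw [div_pow, Real.exp_one_pow, mul_div_assoc', div_lt_iff₀ (by positivity)] at hstir
  rw [Real.rpow_sub_one hn0.ne', Real.rpow_natCast, div_div, hfact,
    div_lt_div_iff₀ (by positivity) (by positivity)]
  linarith

theorem rpow_mul_exp_neg_le {t x : ℝ} (ht : 0 < t) (hx : 0 < x) :
    t ^ x * exp (-t) ≤ x ^ x * exp (-x) := by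
  rw [Real.rpow_def_of_pos ht, Real.rpow_def_of_pos hx, ← Real.exp_add, ← Real.exp_add,
    Real.exp_le_exp]
  have hlog := Real.log_le_sub_one_of_pos (div_pos ht hx)
  rw [Real.log_div ht.ne' hx.ne', div_sub_one hx.ne', le_div_iff₀ hx] at hlog
  linarith

theorem integrableOn_rpow_sub_one_mul_exp_neg {a : ℝ} (ha : 0 < a) :
    IntegrableOn (fun t => t ^ (a - 1) * exp (-t)) (Set.Ioi 0) := by
  simpa only [mul_comm] using Real.GammaIntegral_convergent ha

theorem lowerGamma_le {a x : ℝ} (hx : 0 < x) (hxa : x < a) :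
    lowerGamma a x ≤ x ^ a * exp (-x) / (a - x) := by
  have hp : -1 < a - 1 - x := by linarith
  have hf : IntervalIntegrable (fun t => t ^ (a - 1) * exp (-t)) volume 0 x :=
    (intervalIntegrable_iff_integrableOn_Ioc_of_le hx.le).mpr <|
      (integrableOn_rpow_sub_one_mul_exp_neg (hx.trans hxa)).mono_set Set.Ioc_subset_Ioi_self
  calc lowerGamma a x ≤ ∫ t in (0 : ℝ)..x, x ^ x * exp (-x) * t ^ (a - 1 - x) := by
        refine intervalIntegral.integral_mono_on_of_le_Ioo hx.le hf
          ((intervalIntegral.intervalIntegrable_rpow' hp).const_mul _) fun t ht => ?_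
        have hsplit : t ^ (a - 1) = t ^ (a - 1 - x) * t ^ x := by
          rw [← Real.rpow_add ht.1, sub_add_cancel]
        rw [hsplit, mul_assoc, mul_comm _ (t ^ (a - 1 - x))]
        exact mul_le_mul_of_nonneg_left (rpow_mul_exp_neg_le ht.1 hx)
          (Real.rpow_nonneg ht.1.le _)
    _ = x ^ a * exp (-x) / (a - x) := by
        rw [intervalIntegral.integral_const_mul, integral_rpow (Or.inl hp),
          Real.zero_rpow (by linarith), sub_zero, show a - 1 - x + 1 = a - x by ring,
          mul_div_assoc', mul_right_comm, ← Real.rpow_add hx, add_sub_cancel]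

theorem lowerGamma_add_upperGamma {a x : ℝ} (ha : 0 < a) (hx : 0 ≤ x) :
    lowerGamma a x + upperGamma a x = Real.Gamma a := by
  have hI := integrableOn_rpow_sub_one_mul_exp_neg ha
  rw [lowerGamma, intervalIntegral.integral_of_le hx, upperGamma,
    ← setIntegral_union (Set.Ioc_disjoint_Ioi le_rfl) measurableSet_Ioi
      (hI.mono_set Set.Ioc_subset_Ioi_self) (hI.mono_set (Set.Ioi_subset_Ioi hx)),
    Set.Ioc_union_Ioi_eq_Ioi hx, Real.Gamma_eq_integral ha]
  simp only [mul_comm]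

theorem one_sub_regGammaQ {a x : ℝ} (ha : 0 < a) (hx : 0 ≤ x) :
    1 - regGammaQ a x = lowerGamma a x / Real.Gamma a := by
  rw [regGammaQ, eq_div_iff (Real.Gamma_pos_of_pos ha).ne', sub_mul, one_mul,
    div_mul_cancel₀ _ (Real.Gamma_pos_of_pos ha).ne', ← lowerGamma_add_upperGamma ha hx]
  ring

theorem stmt16 (z : ℕ) (hz : 1 ≤ z) (lam : ℝ) (h0 : 0 < lam) (h1 : lam < 1) :
    1 - regGammaQ (z : ℝ) (lam * z)
        < (1 / (1 - lam)) * (1 / Real.sqrt (2 * π * z)) *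
            Real.exp (-(z : ℝ) * (lam - 1 - Real.log lam))
    ∧ lowerGamma (z : ℝ) (lam * z)
        ≤ lam ^ (z : ℕ) * (z : ℝ) ^ ((z : ℝ) - 1) * Real.exp (-lam * z) / (1 - lam) := by
  have hz0 : (0 : ℝ) < z := by exact_mod_cast hz
  have hx : 0 < lam * z := by positivity
  have hbound : (lam * z) ^ (z : ℝ) * exp (-(lam * z)) / (z - lam * z)
      = lam ^ z * (z : ℝ) ^ ((z : ℝ) - 1) * exp (-lam * z) / (1 - lam) := by
    rw [Real.mul_rpow h0.le hz0.le, Real.rpow_natCast, Real.rpow_sub_one hz0.ne',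
      Real.rpow_natCast]
    field_simp
  have hlower := hbound ▸ lowerGamma_le hx (mul_lt_of_lt_one_left hz0 h1)
  have hexp : exp (-(z : ℝ) * (lam - 1 - log lam)) = lam ^ z * exp (-lam * z) * exp z := by
    rw [show -(z : ℝ) * (lam - 1 - log lam) = z * log lam + -lam * z + z by ring,
      Real.exp_add, Real.exp_add, Real.exp_nat_mul, Real.exp_log h0]
  refine ⟨?_, hlower⟩
  rw [one_sub_regGammaQ hz0 hx.le]
  calc _ ≤ lam ^ z * (z : ℝ) ^ ((z : ℝ) - 1) * exp (-lam * z) / (1 - lam) / Real.Gamma z := by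
        gcongr
    _ = lam ^ z * exp (-lam * z) / (1 - lam) * ((z : ℝ) ^ ((z : ℝ) - 1) / Real.Gamma z) := by
        ring
    _ < lam ^ z * exp (-lam * z) / (1 - lam) * (exp z / √(2 * π * z)) := by
        exact mul_lt_mul_of_pos_left (natCast_rpow_sub_one_div_Gamma_lt (by omega))
          (div_pos (by positivity) (sub_pos.mpr h1))
    _ = _ := by
        rw [hexp]
        field_simp
end

section
/- Let α > 0. For all x > (1 + 1/√2)·log α, e^x > αx. -/
theorem stmt18 (α : ℝ) (hα : 0 < α) (x : ℝ)
    (hx : (1 + 1 / Real.sqrt 2) * Real.log α < x) :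
    α * x < Real.exp x := by
  rcases le_or_gt x 0 with hx0 | hx0
  · have : α * x ≤ 0 := mul_nonpos_of_nonneg_of_nonpos hα.le hx0
    linarith [Real.exp_pos x]
  · have hs : Real.sqrt 2 > 1.414 := by
      have : (1.414 : ℝ) ^ 2 < 2 := by norm_num
      nlinarith [Real.sq_sqrt (by norm_num : (2:ℝ) ≥ 0), Real.sqrt_nonneg 2]
    have hs2 : Real.sqrt 2 ^ 2 = 2 := Real.sq_sqrt (by norm_num)
    have he : Real.exp 1 > 2.718 := by
      have := Real.exp_one_gt_d9; linarith
    -- log x ≤ x / e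
    have hlogx : Real.log x ≤ x / Real.exp 1 := by
      have h1 : Real.log (x / Real.exp 1) ≤ x / Real.exp 1 - 1 :=
        Real.log_le_sub_one_of_pos (by positivity)
      have h2 : Real.log (x / Real.exp 1) = Real.log x - 1 := by
        rw [Real.log_div hx0.ne' (Real.exp_pos 1).ne', Real.log_exp]
      linarith
    -- x/e < (√2 - 1) x
    have hkey : x / Real.exp 1 < (Real.sqrt 2 - 1) * x := by
      rw [div_lt_iff₀ (Real.exp_pos 1)]
      have h1 : (1:ℝ) < (Real.sqrt 2 - 1) * Real.exp 1 := by nlinarith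
      nlinarith [mul_lt_mul_of_pos_left h1 hx0]
    -- log α < x / (1 + 1/√2)
    have hc : (0:ℝ) < 1 + 1 / Real.sqrt 2 := by positivity
    have hlogα : Real.log α < x / (1 + 1 / Real.sqrt 2) :=
      (lt_div_iff₀ hc).2 (by linarith [hx])
    have hfrac : x / (1 + 1 / Real.sqrt 2) = (2 - Real.sqrt 2) * x := by
      have hsne : Real.sqrt 2 ≠ 0 := by positivity
      field_simp
      nlinarith
    have hsum : Real.log α + Real.log x < x := by
      rw [hfrac] at hlogα
      nlinarith
    calc α * x = Real.exp (Real.log α + Real.log x) := by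
          rw [Real.exp_add, Real.exp_log hα, Real.exp_log hx0]
      _ < Real.exp x := Real.exp_lt_exp.2 hsum
end

section
/- Let 0 < q < 1/2, p = 1 - q, λ = q/p, and for integer z ≥ 1 define P(z,κ) = 1 - Q(z, κzλ) + λ^z e^{κz(1-λ)} Q(z, κz), where Q(z,x) = e^{-x}∑_{k=0}^{z-1} x^k/k!. Then ∂P/∂κ (z,κ) = λ^z z(1-λ) e^{z(1-λ)κ} Γ(z, zκ)/Γ(z) > 0 for all κ > 0; in particular κ ↦ P(z,κ) is strictly increasing on (0,∞). -/
open Real MeasureTheory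

/-- Regularized upper incomplete gamma function at integer first argument,
as a finite sum. -/
noncomputable def Qsum (z : ℕ) (x : ℝ) : ℝ :=
  Real.exp (-x) * ∑ k ∈ Finset.range z, x ^ k / (Nat.factorial k : ℝ)

/-- The double spend success probability conditional to deviation κ. -/
noncomputable def Pzκ (lam : ℝ) (z : ℕ) (κ : ℝ) : ℝ :=
  1 - Qsum z (κ * z * lam) + lam ^ z * Real.exp (κ * z * (1 - lam)) * Qsum z (κ * z)

/-!
Differentiating `P`, the two density terms `e^{-x} x^{z-1}/(z-1)!` produced by the two factors
`Q` cancel, since `λ^z e^{κz(1-λ)} e^{-κz} (κz)^{z-1} = λ (κzλ)^{z-1} e^{-κzλ}`. What remains is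
`λ^z z (1-λ) e^{κz(1-λ)} Q(z, κz)`, and `Q(z, x) = Γ(z, x)/Γ(z)` because `-(z-1)! Q(z, ·)` is a
primitive of `t^{z-1} e^{-t}` vanishing at infinity. This derivative is positive for `κ > 0`.
-/

open Filter Topology Finset Nat

lemma hasDerivAt_sum_range_pow_div_factorial (m : ℕ) (x : ℝ) :
    HasDerivAt (fun x : ℝ => ∑ k ∈ range (m + 1), x ^ k / (k ! : ℝ))
      (∑ k ∈ range m, x ^ k / (k ! : ℝ)) x := by
  induction m with
  | zero => simpa using hasDerivAt_const x (1 : ℝ)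
  | succ m ih =>
    simp_rw [sum_range_succ _ (m + 1)]
    refine (ih.add ((hasDerivAt_pow (m + 1) x).div_const ((m + 1) ! : ℝ))).congr_deriv ?_
    rw [sum_range_succ, factorial_succ]
    push_cast
    field_simp

lemma hasDerivAt_Qsum_succ (m : ℕ) (x : ℝ) :
    HasDerivAt (Qsum (m + 1)) (-(exp (-x) * x ^ m / (m ! : ℝ))) x := by
  refine ((hasDerivAt_neg x).exp.mul (hasDerivAt_sum_range_pow_div_factorial m x)).congr_deriv ?_
  rw [sum_range_succ]
  ring

lemma Qsum_pos {z : ℕ} (hz : z ≠ 0) {x : ℝ} (hx : 0 ≤ x) : 0 < Qsum z x :=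
  mul_pos (exp_pos _) <|
    sum_pos' (fun k _ => by positivity) ⟨0, by simpa [pos_iff_ne_zero], by simp⟩

lemma tendsto_Qsum_atTop (z : ℕ) : Tendsto (Qsum z) atTop (𝓝 0) := by
  have h := tendsto_finsetSum (range z) fun k _ =>
    (tendsto_pow_mul_exp_neg_atTop_nhds_zero k).div_const (k ! : ℝ)
  simp only [zero_div, sum_const_zero] at h
  refine h.congr fun t => ?_
  rw [Qsum, mul_sum]
  exact sum_congr rfl fun k _ => by ring

lemma upperGamma_natCast_succ (m : ℕ) {x : ℝ} (hx : 0 ≤ x) :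
    upperGamma (m + 1 : ℕ) x = m ! * Qsum (m + 1) x := by
  have hF : ∀ t, HasDerivAt (fun t => -(m ! : ℝ) * Qsum (m + 1) t) (t ^ m * exp (-t)) t := by
    intro t
    refine ((hasDerivAt_Qsum_succ m t).const_mul (-(m ! : ℝ))).congr_deriv ?_
    field_simp
  have hint : IntegrableOn (fun t : ℝ => t ^ m * exp (-t)) (Set.Ioi x) := by
    refine ((GammaIntegral_convergent (s := m + 1) (by positivity)).mono_set
      (Set.Ioi_subset_Ioi hx)).congr_fun (fun t _ => ?_) measurableSet_Ioi
    simp [mul_comm]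
  have := integral_Ioi_of_hasDerivAt_of_tendsto' (fun t _ => hF t) hint
    (by simpa using (tendsto_Qsum_atTop (m + 1)).const_mul (-(m ! : ℝ)))
  simp only [upperGamma, Nat.cast_add, Nat.cast_one, add_sub_cancel_right, rpow_natCast, this]
  ring

lemma Qsum_eq_upperGamma_div_Gamma {z : ℕ} (hz : z ≠ 0) {x : ℝ} (hx : 0 ≤ x) :
    Qsum z x = upperGamma z x / Gamma z := by
  obtain ⟨m, rfl⟩ := exists_eq_succ_of_ne_zero hz
  rw [upperGamma_natCast_succ m hx, Nat.cast_succ, Gamma_nat_eq_factorial]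
  field_simp

lemma hasDerivAt_Pzκ_succ (lam : ℝ) (m : ℕ) (κ : ℝ) :
    HasDerivAt (Pzκ lam (m + 1)) (lam ^ (m + 1) * (m + 1 : ℕ) * (1 - lam) *
      exp ((m + 1 : ℕ) * (1 - lam) * κ) * Qsum (m + 1) ((m + 1 : ℕ) * κ)) κ := by
  set c : ℝ := ((m + 1 : ℕ) : ℝ)
  have hlow := (hasDerivAt_Qsum_succ m (κ * c * lam)).comp κ
    ((hasDerivAt_mul_const c).mul_const lam)
  have hexp :=
    ((hasDerivAt_mul_const (x := κ) c).mul_const (1 - lam)).exp.const_mul (lam ^ (m + 1))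
  have hup := (hasDerivAt_Qsum_succ m (κ * c)).comp κ (hasDerivAt_mul_const c)
  refine (((hasDerivAt_const κ 1).sub hlow).add (hexp.mul hup)).congr_deriv ?_
  have hcancel : exp (κ * c * (1 - lam)) * exp (-(κ * c)) = exp (-(κ * c * lam)) := by
    rw [← exp_add]; ring_nf
  rw [Function.comp_apply, ← hcancel, mul_pow, mul_comm κ c]
  field_simp
  ring

lemma hasDerivAt_Pzκ (lam : ℝ) (z : ℕ) (κ : ℝ) :
    HasDerivAt (Pzκ lam z)
      (lam ^ z * z * (1 - lam) * exp (z * (1 - lam) * κ) * Qsum z (z * κ)) κ := by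
  cases z with
  | zero =>
    have hconst : Pzκ lam 0 = fun _ => 1 := by funext; simp [Pzκ, Qsum]
    simpa [hconst] using hasDerivAt_const κ (1 : ℝ)
  | succ m => exact hasDerivAt_Pzκ_succ lam m κ

theorem stmt19 (q : ℝ) (hq0 : 0 < q) (hq1 : q < 1/2) (p lam : ℝ)
    (hp : p = 1 - q) (hlam : lam = q / p) (z : ℕ) (hz : 1 ≤ z) :
    (∀ κ : ℝ, 0 < κ →
      HasDerivAt (fun κ => Pzκ lam z κ)
        (lam ^ z * z * (1 - lam) * Real.exp ((z : ℝ) * (1 - lam) * κ) *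
          upperGamma (z : ℝ) (z * κ) / Real.Gamma (z : ℝ)) κ
      ∧ 0 < lam ^ z * z * (1 - lam) * Real.exp ((z : ℝ) * (1 - lam) * κ) *
          upperGamma (z : ℝ) (z * κ) / Real.Gamma (z : ℝ))
    ∧ StrictMonoOn (fun κ => Pzκ lam z κ) (Set.Ioi 0) := by
  have hp0 : 0 < p := by linarith
  have hlam0 : 0 < lam := hlam ▸ div_pos hq0 hp0
  have hlam1 : 0 < 1 - lam := by rw [hlam, sub_pos, div_lt_one hp0]; linarith
  have hz0 : z ≠ 0 := by omega
  have hderiv_pos (κ : ℝ) (hκ : 0 < κ) :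
      0 < lam ^ z * z * (1 - lam) * exp (z * (1 - lam) * κ) * Qsum z (z * κ) := by
    have := Qsum_pos hz0 (by positivity : (0 : ℝ) ≤ z * κ)
    positivity
  refine ⟨fun κ hκ => ?_, ?_⟩
  · rw [mul_div_assoc, ← Qsum_eq_upperGamma_div_Gamma hz0 (by positivity)]
    exact ⟨hasDerivAt_Pzκ lam z κ, hderiv_pos κ hκ⟩
  · refine strictMonoOn_of_hasDerivWithinAt_pos (convex_Ioi 0)
      (fun κ _ => (hasDerivAt_Pzκ lam z κ).continuousAt.continuousWithinAt)
      (fun κ _ => (hasDerivAt_Pzκ lam z κ).hasDerivWithinAt) ?_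
    rw [interior_Ioi]
    exact hderiv_pos
end
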